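/- For a continuously differentiable vector field f on ℝ^N whose attractor 𝒜 consists of the points of a locally attractive hyperbolic solution x̃, the return time T_R(𝒜, x_p) = (1/dist(x_p,𝒜)) ∫₀^∞ dist(φ(t, x_p), 𝒜) dt is finite for every x_p in the basin of attraction ℬ(𝒜) \ 𝒜. -/

import Mathlib

/-!
A trajectory from the basin has an ω-limit point `ξ s₀` on the attractor, so at some time `t₀` it
comes within `δ` of `ξ s₀`. From then on the first approximation property, applied at the point
`φ t₀ x_p` and transported along the flow, keeps it within `K e^{-β (t - t₀)}` of `ξ (t - t₀ + s₀)`.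
The distance to the attractor is therefore continuous on `[0, t₀]` and exponentially small
afterwards, hence integrable.
-/

open Metric Set Filter MeasureTheory

/-- The conclusion of the First Approximation Theorem for a locally attractive hyperbolic solution
`ξ` of the flow `φ`. -/
def FirstApproximation {X : Type*} [PseudoMetricSpace X] (φ : ℝ → X → X) (ξ : ℝ → X)
    (K β δ : ℝ) : Prop :=
  ∀ s : ℝ, ∀ xb, dist xb (ξ s) ≤ δ → ∀ t ≥ s, dist (φ (t - s) xb) (ξ t) ≤ K * Real.exp (-β * (t - s))

theorem FirstApproximation.infDist_range_le {X : Type*} [PseudoMetricSpace X] {φ : ℝ → X → X}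
    {ξ : ℝ → X} {K β δ : ℝ} (h : FirstApproximation φ ξ K β δ)
    (hφadd : ∀ s t x, φ (s + t) x = φ s (φ t x)) {x : X} {t₀ s₀ : ℝ}
    (hclose : dist (φ t₀ x) (ξ s₀) ≤ δ) {t : ℝ} (ht : t₀ ≤ t) :
    infDist (φ t x) (range ξ) ≤ K * Real.exp (-β * (t - t₀)) := by
  have hdecay := h s₀ (φ t₀ x) hclose (t - t₀ + s₀) (by linarith)
  rw [add_sub_cancel_right, ← hφadd, sub_add_cancel] at hdecay
  exact (infDist_le_dist_of_mem (mem_range_self _)).trans hdecay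

theorem exists_dist_lt_of_mem_omegaLimit {X : Type*} [PseudoMetricSpace X] {φ : ℝ → X → X}
    {x y : X} (hy : y ∈ omegaLimit atTop φ {x}) {ε : ℝ} (hε : 0 < ε) :
    ∃ t, dist (φ t x) y < ε := by
  obtain ⟨t, z, rfl, hz⟩ :=
    ((mem_omegaLimit_iff_frequently _ _ _ _).mp hy (ball y ε) (ball_mem_nhds y hε)).exists
  exact ⟨t, hz⟩

theorem integrableOn_Ici_of_norm_le_exp {E : Type*} [NormedAddCommGroup E] {g : ℝ → E}
    (hg : Continuous g) {a t₀ C β : ℝ} (hβ : 0 < β)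
    (hbound : ∀ t ≥ t₀, ‖g t‖ ≤ C * Real.exp (-β * (t - t₀))) :
    IntegrableOn g (Ici a) := by
  have hIcc : IntegrableOn g (Icc a t₀) := hg.continuousOn.integrableOn_Icc
  have hIoi : IntegrableOn g (Ioi t₀) := by
    refine Integrable.mono' ((exp_neg_integrableOn_Ioi t₀ hβ).const_mul (C * Real.exp (β * t₀)))
      hg.aestronglyMeasurable.restrict ?_
    refine (ae_restrict_iff' measurableSet_Ioi).mpr (ae_of_all _ fun t ht => ?_)
    calc ‖g t‖ ≤ C * Real.exp (-β * (t - t₀)) := hbound t (le_of_lt ht)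
      _ = C * Real.exp (β * t₀) * Real.exp (-β * t) := by
        rw [mul_assoc, ← Real.exp_add]; ring_nf
  refine (hIcc.union hIoi).mono_set fun t ht => ?_
  rcases le_or_gt t t₀ with h | h
  · exact Or.inl ⟨ht, h⟩
  · exact Or.inr h

theorem return_time_finite_general
    {N : ℕ}
    (φ : ℝ → EuclideanSpace ℝ (Fin N) → EuclideanSpace ℝ (Fin N))
    (hφcont : Continuous fun p : ℝ × EuclideanSpace ℝ (Fin N) => φ p.1 p.2)
    (hφadd : ∀ s t x, φ (s + t) x = φ s (φ t x))
    (ξ : ℝ → EuclideanSpace ℝ (Fin N))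
    (𝒜 : Set (EuclideanSpace ℝ (Fin N)))
    (h𝒜 : 𝒜 = Set.range ξ)
    -- first approximation property of the locally attractive hyperbolic solution ξ :
    (K β δ : ℝ) (hβ : 0 < β) (hδ : 0 < δ)
    (hhyp : ∀ s : ℝ, ∀ xb, dist xb (ξ s) ≤ δ →
      ∀ t ≥ s, dist (φ (t - s) xb) (ξ t) ≤ K * Real.exp (-β * (t - s))) :
    ∀ x_p ∈ {x₀ | (omegaLimit atTop φ {x₀}).Nonempty ∧ omegaLimit atTop φ {x₀} ⊆ 𝒜} \ 𝒜,
      IntegrableOn (fun t => infDist (φ t x_p) 𝒜) (Ici (0:ℝ)) := by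
  subst h𝒜
  rintro x_p ⟨⟨⟨y, hy⟩, hsub⟩, -⟩
  obtain ⟨s₀, rfl⟩ := hsub hy
  obtain ⟨t₀, ht₀⟩ := exists_dist_lt_of_mem_omegaLimit hy hδ
  have hcont : Continuous fun t => infDist (φ t x_p) (range ξ) :=
    (continuous_infDist_pt _).comp (hφcont.comp (continuous_id.prodMk continuous_const))
  refine integrableOn_Ici_of_norm_le_exp (t₀ := t₀) (C := K) hcont hβ fun t ht => ?_
  rw [Real.norm_of_nonneg infDist_nonneg]
  exact FirstApproximation.infDist_range_le hhyp hφadd ht₀.le ht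

/-- for a C¹ vector field whose attractor is the set of points of a
locally attractive hyperbolic solution, the return time is finite (the integral
of the distance to the attractor along any trajectory starting in the basin
converges). -/
theorem return_time_finite
    {N : ℕ} (f : EuclideanSpace ℝ (Fin N) → EuclideanSpace ℝ (Fin N))
    (hf : ContDiff ℝ 1 f)
    (φ : ℝ → EuclideanSpace ℝ (Fin N) → EuclideanSpace ℝ (Fin N))
    (hφcont : Continuous fun p : ℝ × EuclideanSpace ℝ (Fin N) => φ p.1 p.2)
    (hφzero : ∀ x, φ 0 x = x)
    (hφadd : ∀ s t x, φ (s + t) x = φ s (φ t x))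
    (hφode : ∀ x t, HasDerivAt (fun s => φ s x) (f (φ t x)) t)
    (ξ : ℝ → EuclideanSpace ℝ (Fin N))
    (hξsol : ∀ t, HasDerivAt ξ (f (ξ t)) t)
    (𝒜 : Set (EuclideanSpace ℝ (Fin N)))
    (h𝒜 : 𝒜 = Set.range ξ)
    (h𝒜comp : IsCompact 𝒜)
    -- first approximation property of the locally attractive hyperbolic solution ξ :
    (K β δ : ℝ) (hK : 1 ≤ K) (hβ : 0 < β) (hδ : 0 < δ)
    (hhyp : ∀ s : ℝ, ∀ xb, dist xb (ξ s) ≤ δ →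
      ∀ t ≥ s, dist (φ (t - s) xb) (ξ t) ≤ K * Real.exp (-β * (t - s))) :
    ∀ x_p ∈ {x₀ | (omegaLimit atTop φ {x₀}).Nonempty ∧ omegaLimit atTop φ {x₀} ⊆ 𝒜} \ 𝒜,
      IntegrableOn (fun t => infDist (φ t x_p) 𝒜) (Ici (0:ℝ)) :=
  return_time_finite_general φ hφcont hφadd ξ 𝒜 h𝒜 K β δ hβ hδ hhyp
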